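/- Let W ∈ ℝ^{n×n} be symmetric positive definite, D = I - (1/n)𝟙𝟙ᵀ, and suppose ω ∈ ℝⁿ satisfies the generalized eigenvalue equation W⁻¹ω = λDω with λ ≥ 0 and Dω ≠ 0. If ρ ≥ 0 satisfies ‖D(z - ρω)‖² = η, then the energy (ρω)ᵀW⁻¹(ρω) is at most (‖Dz‖ + √η)²·λ. -/
import Mathlib


open Matrix

theorem stmt_13 (n : ℕ) (hn : 0 < n) (W : Matrix (Fin n) (Fin n) ℝ) (hW : W.PosDef)
    (D : Matrix (Fin n) (Fin n) ℝ)
    (hD : D = 1 - (n : ℝ)⁻¹ • Matrix.of (fun _ _ : Fin n => (1 : ℝ)))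
    (ω z : Fin n → ℝ) (lam : ℝ) (hlam : 0 ≤ lam)
    (heig : W⁻¹ *ᵥ ω = lam • (D *ᵥ ω)) (hDω : D *ᵥ ω ≠ 0)
    (η ρ : ℝ) (hρ : 0 ≤ ρ)
    (hsec : (D *ᵥ (z - ρ • ω)) ⬝ᵥ (D *ᵥ (z - ρ • ω)) = η) :
    (ρ • ω) ⬝ᵥ (W⁻¹ *ᵥ (ρ • ω)) ≤
      (Real.sqrt ((D *ᵥ z) ⬝ᵥ (D *ᵥ z)) + Real.sqrt η) ^ 2 * lam := by
  set b := D *ᵥ ω with hb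
  set a := D *ᵥ z with ha
  -- D is symmetric
  have hJ : (Matrix.of (fun _ _ : Fin n => (1 : ℝ))) * (Matrix.of (fun _ _ : Fin n => (1 : ℝ)))
      = (n : ℝ) • Matrix.of (fun _ _ : Fin n => (1 : ℝ)) := by
    ext i j
    simp [Matrix.mul_apply]
  have hDsymm : Dᵀ = D := by
    subst hD
    ext i j
    simp [Matrix.transpose_apply, Matrix.one_apply, eq_comm]
  have hDD : D * D = D := by
    rw [hD]
    have hc : (n : ℝ)⁻¹ * ((n : ℝ)⁻¹ * (n : ℝ)) = (n : ℝ)⁻¹ := by field_simp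
    simp only [sub_mul, mul_sub, one_mul, mul_one, Matrix.smul_mul, Matrix.mul_smul, hJ,
      smul_smul, hc]
    abel
  -- ω ⬝ᵥ b = b ⬝ᵥ b
  have hωb : ω ⬝ᵥ b = b ⬝ᵥ b := by
    have : b ᵥ* D = b := by
      rw [← Matrix.mulVec_transpose, hDsymm, hb, Matrix.mulVec_mulVec, hDD]
    rw [dotProduct_comm ω b, Matrix.dotProduct_mulVec, this]
  -- LHS reduction
  have hLHS : (ρ • ω) ⬝ᵥ (W⁻¹ *ᵥ (ρ • ω)) = lam * (ρ * ρ * (b ⬝ᵥ b)) := by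
    rw [Matrix.mulVec_smul, heig, smul_dotProduct, dotProduct_smul,
      dotProduct_smul, hωb]
    simp [smul_eq_mul]
    ring
  -- Euclidean space machinery
  set e := (WithLp.equiv 2 (Fin n → ℝ)).symm with he
  have hnorm : ∀ v : Fin n → ℝ, v ⬝ᵥ v = ‖e v‖ ^ 2 := by
    intro v
    rw [EuclideanSpace.norm_eq, Real.sq_sqrt (by positivity)]
    simp only [dotProduct, Real.norm_eq_abs, sq_abs]
    simp [he, sq]
  have hC : D *ᵥ (z - ρ • ω) = a - ρ • b := by
    rw [Matrix.mulVec_sub, Matrix.mulVec_smul]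
  have hη : η = ‖e (a - ρ • b)‖ ^ 2 := by rw [← hsec, hC, hnorm]
  have hηnn : 0 ≤ η := by rw [hη]; positivity
  have hsqrtη : Real.sqrt η = ‖e (a - ρ • b)‖ := by
    rw [hη, Real.sqrt_sq (norm_nonneg _)]
  have hsqrta : Real.sqrt (a ⬝ᵥ a) = ‖e a‖ := by
    rw [hnorm, Real.sqrt_sq (norm_nonneg _)]
  -- triangle inequality
  have hesub : e (a - ρ • b) = e a - ρ • e b := by
    simp [he]
  have htri : ρ * ‖e b‖ ≤ ‖e a‖ + ‖e (a - ρ • b)‖ := by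
    have h1 : ρ • e b = e a - (e a - ρ • e b) := by abel
    calc ρ * ‖e b‖ = ‖ρ • e b‖ := by
          rw [norm_smul, Real.norm_eq_abs, abs_of_nonneg hρ]
      _ = ‖e a - (e a - ρ • e b)‖ := by rw [← h1]
      _ ≤ ‖e a‖ + ‖e a - ρ • e b‖ := norm_sub_le _ _
      _ = ‖e a‖ + ‖e (a - ρ • b)‖ := by rw [hesub]
  -- finish
  rw [hLHS, hsqrtη, hsqrta, hnorm b]
  have hsq : (ρ * ‖e b‖) ^ 2 ≤ (‖e a‖ + ‖e (a - ρ • b)‖) ^ 2 := by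
    apply pow_le_pow_left₀ (by positivity) htri
  calc lam * (ρ * ρ * ‖e b‖ ^ 2) = (ρ * ‖e b‖) ^ 2 * lam := by ring
    _ ≤ (‖e a‖ + ‖e (a - ρ • b)‖) ^ 2 * lam := by
        exact mul_le_mul_of_nonneg_right hsq hlam
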